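/- Let a, b be real numbers with 1 < a < b. Then π = (2/a)·√( (b²−a²)(1−a²b²)/(1−b⁴) ) · ( (1+b²)·K( b(a²−1)/(a(b²−1)) ) + (1−b²)·K( b(a²+1)/(a(b²+1)) ) ) / F_D^(3)(1/2; 1/2,1/2,1/2; 2 | 1/(1−b⁴), 1/(1−a²b²), a²/(a²−b²) ). -/

import Mathlib

/-!
For `ε = ±1` the substitution `t = (b² - ε) √(1 - u) / (b² - ε + ε u)` maps `(0, 1)` onto
itself and turns `K(b (a² - ε) / (a (b² - ε)))` into an integral over `(0, 1)` against
`1 / √Q(u)`, where `Q(u) = u (u + b⁴ - 1) (u + a²b² - 1) (a²u + b² - a²)`. In the combination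
`(1 + b²) K₁ + (1 - b²) K₂` everything but `a (b⁴ - 1) ∫₀¹ √(1 - u) / √Q(u) du` cancels.
Since `Q(u) = u (1 - x₁u) (1 - x₂u) (1 - x₃u) · (b⁴ - 1)(a²b² - 1)(b² - a²)`, the Euler
integral of `F_D` is the same integral, up to the factor `(2 / π) √((b⁴ - 1)(a²b² - 1)(b² - a²))`.
-/

open MeasureTheory Real

/-- Complete elliptic integral of the first kind. -/
noncomputable def ellipticK (k : ℝ) : ℝ :=
  ∫ t in (0:ℝ)..1, 1 / Real.sqrt ((1 - t ^ 2) * (1 - k ^ 2 * t ^ 2))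

/-- Complete elliptic integral of the second kind. -/
noncomputable def ellipticE (k : ℝ) : ℝ :=
  ∫ t in (0:ℝ)..1, Real.sqrt (1 - k ^ 2 * t ^ 2) / Real.sqrt (1 - t ^ 2)

/-- Lauricella hypergeometric function `F_D^(3)` (real arguments), via its
Euler integral representation. -/
noncomputable def FD3 (a b₁ b₂ b₃ c x₁ x₂ x₃ : ℝ) : ℝ :=
  Real.Gamma c / (Real.Gamma a * Real.Gamma (c - a)) *
    ∫ u in (0:ℝ)..1,
      u ^ (a - 1) * (1 - u) ^ (c - a - 1) *
        (1 - x₁ * u) ^ (-b₁) * (1 - x₂ * u) ^ (-b₂) * (1 - x₃ * u) ^ (-b₃)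

/-- Appell hypergeometric function `F₁` (real arguments), via its
Euler integral representation. -/
noncomputable def appellF1 (a b₁ b₂ c x y : ℝ) : ℝ :=
  Real.Gamma c / (Real.Gamma a * Real.Gamma (c - a)) *
    ∫ u in (0:ℝ)..1,
      u ^ (a - 1) * (1 - u) ^ (c - a - 1) * (1 - x * u) ^ (-b₁) * (1 - y * u) ^ (-b₂)

/-- Lauricella hypergeometric function `F_D^(3)` (complex arguments), via its
Euler integral representation with principal branches. -/
noncomputable def FD3C (a b₁ b₂ b₃ c x₁ x₂ x₃ : ℂ) : ℂ :=
  Complex.Gamma c / (Complex.Gamma a * Complex.Gamma (c - a)) *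
    ∫ u in (0:ℝ)..1,
      (u : ℂ) ^ (a - 1) * ((1 : ℂ) - (u : ℂ)) ^ (c - a - 1) *
        (1 - x₁ * (u : ℂ)) ^ (-b₁) * (1 - x₂ * (u : ℂ)) ^ (-b₂) *
        (1 - x₃ * (u : ℂ)) ^ (-b₃)

/-- Lauricella hypergeometric function `F_D^(4)` (complex arguments), via its
Euler integral representation with principal branches. -/
noncomputable def FD4C (a b₁ b₂ b₃ b₄ c x₁ x₂ x₃ x₄ : ℂ) : ℂ :=
  Complex.Gamma c / (Complex.Gamma a * Complex.Gamma (c - a)) *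
    ∫ u in (0:ℝ)..1,
      (u : ℂ) ^ (a - 1) * ((1 : ℂ) - (u : ℂ)) ^ (c - a - 1) *
        (1 - x₁ * (u : ℂ)) ^ (-b₁) * (1 - x₂ * (u : ℂ)) ^ (-b₂) *
        (1 - x₃ * (u : ℂ)) ^ (-b₃) * (1 - x₄ * (u : ℂ)) ^ (-b₄)

open Set

lemma integrableOn_ellipticK_integrand {k : ℝ} (hk : k ^ 2 < 1) :
    IntegrableOn (fun t ↦ 1 / √((1 - t ^ 2) * (1 - k ^ 2 * t ^ 2))) (Ioo 0 1) := by
  have hbound :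
      IntegrableOn (fun t : ℝ ↦ (√(1 - k ^ 2))⁻¹ * (1 - t) ^ (-(1 / 2) : ℝ)) (Ioo 0 1) := by
    have h := (intervalIntegral.intervalIntegrable_rpow' (a := 0) (b := 1) (r := -(1 / 2))
      (by norm_num)).comp_sub_left 1
    rw [sub_zero, sub_self] at h
    replace h := h.symm.const_mul (√(1 - k ^ 2))⁻¹
    rwa [intervalIntegrable_iff_integrableOn_Ioo_of_le zero_le_one] at h
  refine hbound.mono' (Measurable.aestronglyMeasurable (by fun_prop))
    ((ae_restrict_iff' measurableSet_Ioo).2 (ae_of_all _ ?_))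
  rintro t ⟨ht₀, ht₁⟩
  have hlower : (1 - k ^ 2) * (1 - t) ≤ (1 - t ^ 2) * (1 - k ^ 2 * t ^ 2) := by
    nlinarith [mul_nonneg (mul_nonneg (sub_nonneg.2 ht₁.le) ht₀.le)
        (sub_nonneg.2 (by nlinarith : k ^ 2 * t ^ 2 ≤ 1)),
      mul_nonneg (mul_nonneg (sub_nonneg.2 ht₁.le) (sq_nonneg k))
        (sub_nonneg.2 (by nlinarith : t ^ 2 ≤ 1))]
  have hpos : 0 < (1 - k ^ 2) * (1 - t) := mul_pos (by linarith) (by linarith)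
  rw [Real.norm_of_nonneg (by positivity), Real.rpow_neg (by linarith), ← Real.sqrt_eq_rpow,
    ← mul_inv, ← Real.sqrt_mul (by linarith), one_div]
  exact inv_anti₀ (Real.sqrt_pos.2 hpos) (Real.sqrt_le_sqrt hlower)

section Substitution

variable {a b ε u : ℝ}

noncomputable def ellipticSubst (b ε u : ℝ) : ℝ :=
  (b ^ 2 - ε) * √(1 - u) / (b ^ 2 - ε + ε * u)

noncomputable def ellipticSubstDeriv (b ε u : ℝ) : ℝ :=
  -((b ^ 2 - ε) * (b ^ 2 + ε * (1 - u)) / (2 * √(1 - u) * (b ^ 2 - ε + ε * u) ^ 2))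

noncomputable def quartic (a b u : ℝ) : ℝ :=
  u * (u + b ^ 4 - 1) * (u + a ^ 2 * b ^ 2 - 1) * (a ^ 2 * u + b ^ 2 - a ^ 2)

noncomputable def quarticKernel (a b ε u : ℝ) : ℝ :=
  a * (b ^ 2 - ε) * (b ^ 2 + ε * (1 - u)) / (2 * √(1 - u) * √(quartic a b u))

lemma quartic_pos (ha : 1 < a) (hab : a < b) (hu : 0 < u) : 0 < quartic a b u := by
  have ha2 : 1 < a ^ 2 := by nlinarith
  have hab2 : a ^ 2 < b ^ 2 := by nlinarith
  have h₁ : 0 < u + b ^ 4 - 1 := by nlinarith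
  have h₂ : 0 < u + a ^ 2 * b ^ 2 - 1 := by nlinarith
  have h₃ : 0 < a ^ 2 * u + b ^ 2 - a ^ 2 := by nlinarith
  unfold quartic
  positivity

lemma sq_sub_pos_of_sq_eq_one (hε : ε ^ 2 = 1) (hb : 1 < b) : 0 < b ^ 2 - ε := by
  nlinarith [abs_le.mp (sq_le_one_iff_abs_le_one ε |>.mp hε.le)]

lemma ellipticSubst_denom_pos (hε : ε ^ 2 = 1) (hb : 1 < b) (hu : u ∈ Icc 0 1) :
    0 < b ^ 2 - ε + ε * u := by
  obtain ⟨hε₁, hε₂⟩ := abs_le.mp (sq_le_one_iff_abs_le_one ε |>.mp hε.le)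
  nlinarith [hu.1, hu.2, mul_nonneg (sub_nonneg.2 hε₂) (sub_nonneg.2 hu.2)]

lemma ellipticSubst_numer_pos (hε : ε ^ 2 = 1) (hb : 1 < b) (hu : u ∈ Icc 0 1) :
    0 < b ^ 2 + ε * (1 - u) := by
  obtain ⟨hε₁, hε₂⟩ := abs_le.mp (sq_le_one_iff_abs_le_one ε |>.mp hε.le)
  nlinarith [hu.1, hu.2, mul_nonneg (sub_nonneg.2 hε₂) hu.1]

lemma hasDerivAt_ellipticSubst (hu : u < 1) (hd : b ^ 2 - ε + ε * u ≠ 0) :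
    HasDerivAt (ellipticSubst b ε) (ellipticSubstDeriv b ε u) u := by
  have hw : 0 < 1 - u := sub_pos.2 hu
  have hsqrt : HasDerivAt (fun u : ℝ => √(1 - u)) (-1 / (2 * √(1 - u))) u := by
    simpa using ((hasDerivAt_id u).const_sub 1).sqrt hw.ne'
  have hden : HasDerivAt (fun u : ℝ => b ^ 2 - ε + ε * u) ε u := by
    simpa using ((hasDerivAt_id u).const_mul ε).const_add (b ^ 2 - ε)
  refine ((hsqrt.const_mul (b ^ 2 - ε)).div hden hd).congr_deriv ?_
  have hs : √(1 - u) ≠ 0 := (Real.sqrt_pos.2 hw).ne'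
  have hs2 : √(1 - u) ^ 2 = 1 - u := Real.sq_sqrt hw.le
  rw [ellipticSubstDeriv]
  field_simp
  linear_combination (-2 * ε * (b ^ 2 - ε)) * hs2

lemma ellipticSubstDeriv_neg (hε : ε ^ 2 = 1) (hb : 1 < b) (hu : u ∈ Ioo 0 1) :
    ellipticSubstDeriv b ε u < 0 := by
  have hu' : u ∈ Icc 0 1 := Ioo_subset_Icc_self hu
  have hbε := sq_sub_pos_of_sq_eq_one hε hb
  have hd := ellipticSubst_denom_pos hε hb hu'
  have hn := ellipticSubst_numer_pos hε hb hu'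
  have hs : 0 < √(1 - u) := Real.sqrt_pos.2 (sub_pos.2 hu.2)
  rw [ellipticSubstDeriv, neg_lt_zero]
  positivity

lemma one_sub_ellipticSubst_sq (hε : ε ^ 2 = 1) (hu : u ≤ 1) (hd : b ^ 2 - ε + ε * u ≠ 0) :
    1 - ellipticSubst b ε u ^ 2 = u * (u + b ^ 4 - 1) / (b ^ 2 - ε + ε * u) ^ 2 := by
  rw [ellipticSubst, div_pow, mul_pow, Real.sq_sqrt (sub_nonneg.2 hu)]
  field_simp
  linear_combination (u ^ 2 - u) * hε

lemma one_sub_modulus_sq_mul_ellipticSubst_sq (hε : ε ^ 2 = 1) (hu : u ≤ 1) (ha : a ≠ 0)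
    (hbε : b ^ 2 - ε ≠ 0) (hd : b ^ 2 - ε + ε * u ≠ 0) :
    1 - (b * (a ^ 2 - ε) / (a * (b ^ 2 - ε))) ^ 2 * ellipticSubst b ε u ^ 2
      = (u + a ^ 2 * b ^ 2 - 1) * (a ^ 2 * u + b ^ 2 - a ^ 2)
          / (a ^ 2 * (b ^ 2 - ε + ε * u) ^ 2) := by
  simp only [ellipticSubst, div_pow, mul_pow, Real.sq_sqrt (sub_nonneg.2 hu)]
  field_simp
  linear_combination (a ^ 2 * u ^ 2 - 2 * a ^ 2 * u + a ^ 2 + b ^ 2 * u - b ^ 2) * hε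

lemma continuousOn_ellipticSubst (hε : ε ^ 2 = 1) (hb : 1 < b) :
    ContinuousOn (ellipticSubst b ε) (Icc 0 1) :=
  ContinuousOn.div (by fun_prop) (by fun_prop) fun _ hu ↦ (ellipticSubst_denom_pos hε hb hu).ne'

lemma strictAntiOn_ellipticSubst (hε : ε ^ 2 = 1) (hb : 1 < b) :
    StrictAntiOn (ellipticSubst b ε) (Icc 0 1) := by
  refine strictAntiOn_of_deriv_neg (convex_Icc 0 1) (continuousOn_ellipticSubst hε hb) ?_
  intro u hu
  rw [interior_Icc] at hu
  rw [(hasDerivAt_ellipticSubst hu.2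
    (ellipticSubst_denom_pos hε hb (Ioo_subset_Icc_self hu)).ne').deriv]
  exact ellipticSubstDeriv_neg hε hb hu

lemma ellipticSubst_image_Ioo (hε : ε ^ 2 = 1) (hb : 1 < b) :
    ellipticSubst b ε '' Ioo 0 1 = Ioo 0 1 := by
  have hbε := sq_sub_pos_of_sq_eq_one hε hb
  refine Subset.antisymm ?_ ?_
  · rintro _ ⟨u, hu, rfl⟩
    have hd := ellipticSubst_denom_pos hε hb (Ioo_subset_Icc_self hu)
    have hpos : 0 < ellipticSubst b ε u :=
      div_pos (mul_pos hbε (Real.sqrt_pos.2 (sub_pos.2 hu.2))) hd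
    have hsq : 0 < 1 - ellipticSubst b ε u ^ 2 := by
      rw [one_sub_ellipticSubst_sq hε hu.2.le hd.ne']
      have : 1 < b ^ 4 := one_lt_pow₀ hb (by norm_num)
      exact div_pos (mul_pos hu.1 (by linarith [hu.1])) (by positivity)
    exact ⟨hpos, by nlinarith⟩
  · have h := intermediate_value_Ioo' zero_le_one (continuousOn_ellipticSubst hε hb)
    simpa [ellipticSubst, hbε.ne'] using h

lemma abs_ellipticSubstDeriv_mul (ha : 1 < a) (hab : a < b) (hε : ε ^ 2 = 1)
    (hu : u ∈ Ioo 0 1) :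
    |ellipticSubstDeriv b ε u| *
        (1 / √((1 - ellipticSubst b ε u ^ 2) *
          (1 - (b * (a ^ 2 - ε) / (a * (b ^ 2 - ε))) ^ 2 * ellipticSubst b ε u ^ 2)))
      = quarticKernel a b ε u := by
  have hb : 1 < b := ha.trans hab
  have hbε := sq_sub_pos_of_sq_eq_one hε hb
  have hd := ellipticSubst_denom_pos hε hb (Ioo_subset_Icc_self hu)
  have hs : 0 < √(1 - u) := Real.sqrt_pos.2 (sub_pos.2 hu.2)
  have hq : 0 < quartic a b u := quartic_pos ha hab hu.1
  have hprod : (1 - ellipticSubst b ε u ^ 2) *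
      (1 - (b * (a ^ 2 - ε) / (a * (b ^ 2 - ε))) ^ 2 * ellipticSubst b ε u ^ 2)
        = quartic a b u / (a * (b ^ 2 - ε + ε * u) ^ 2) ^ 2 := by
    rw [one_sub_ellipticSubst_sq hε hu.2.le hd.ne',
      one_sub_modulus_sq_mul_ellipticSubst_sq hε hu.2.le (by positivity) hbε.ne' hd.ne', quartic]
    field_simp
  rw [hprod, Real.sqrt_div hq.le, Real.sqrt_sq (by positivity), abs_of_neg
    (ellipticSubstDeriv_neg hε hb hu), ellipticSubstDeriv, quarticKernel]
  have : 0 < √(quartic a b u) := Real.sqrt_pos.2 hq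
  field_simp

lemma ellipticSubst_modulus_sq_lt_one (ha : 1 < a) (hab : a < b) (hε : ε ^ 2 = 1) :
    (b * (a ^ 2 - ε) / (a * (b ^ 2 - ε))) ^ 2 < 1 := by
  obtain ⟨hε₁, hε₂⟩ := abs_le.mp (sq_le_one_iff_abs_le_one ε |>.mp hε.le)
  have ha2 : 1 < a ^ 2 := by nlinarith
  have hab2 : a ^ 2 < b ^ 2 := by nlinarith
  have hnum : 0 < b * (a ^ 2 - ε) := mul_pos (by linarith) (by linarith)
  have hlt : b * (a ^ 2 - ε) < a * (b ^ 2 - ε) := by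
    nlinarith [mul_pos (sub_pos.2 hab) (show 0 < a * b + ε by nlinarith)]
  have hk : b * (a ^ 2 - ε) / (a * (b ^ 2 - ε)) < 1 := (div_lt_one (hnum.trans hlt)).2 hlt
  have hk₀ : 0 < b * (a ^ 2 - ε) / (a * (b ^ 2 - ε)) := div_pos hnum (hnum.trans hlt)
  nlinarith

lemma hasDerivWithinAt_ellipticSubst (hε : ε ^ 2 = 1) (hb : 1 < b) :
    ∀ u ∈ Ioo (0 : ℝ) 1,
      HasDerivWithinAt (ellipticSubst b ε) (ellipticSubstDeriv b ε u) (Ioo 0 1) u :=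
  fun _ hu ↦ (hasDerivAt_ellipticSubst hu.2
    (ellipticSubst_denom_pos hε hb (Ioo_subset_Icc_self hu)).ne').hasDerivWithinAt

lemma ellipticK_eq_integral_quarticKernel (ha : 1 < a) (hab : a < b) (hε : ε ^ 2 = 1) :
    ellipticK (b * (a ^ 2 - ε) / (a * (b ^ 2 - ε)))
      = ∫ u in (0 : ℝ)..1, quarticKernel a b ε u := by
  have hb : 1 < b := ha.trans hab
  rw [ellipticK, intervalIntegral.integral_of_le zero_le_one, integral_Ioc_eq_integral_Ioo,
    ← ellipticSubst_image_Ioo hε hb, integral_image_eq_integral_abs_deriv_smul measurableSet_Ioo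
      (hasDerivWithinAt_ellipticSubst hε hb) ((strictAntiOn_ellipticSubst hε hb).injOn.mono
      Ioo_subset_Icc_self), intervalIntegral.integral_of_le zero_le_one,
    integral_Ioc_eq_integral_Ioo]
  exact setIntegral_congr_fun measurableSet_Ioo fun u hu ↦
    abs_ellipticSubstDeriv_mul ha hab hε hu

lemma intervalIntegrable_quarticKernel (ha : 1 < a) (hab : a < b) (hε : ε ^ 2 = 1) :
    IntervalIntegrable (quarticKernel a b ε) volume 0 1 := by
  have hb : 1 < b := ha.trans hab
  have h := (integrableOn_image_iff_integrableOn_abs_deriv_smul measurableSet_Ioo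
    (hasDerivWithinAt_ellipticSubst hε hb) ((strictAntiOn_ellipticSubst hε hb).injOn.mono
      Ioo_subset_Icc_self) _).1
    (ellipticSubst_image_Ioo hε hb ▸ integrableOn_ellipticK_integrand
      (ellipticSubst_modulus_sq_lt_one ha hab hε))
  rw [intervalIntegrable_iff_integrableOn_Ioo_of_le zero_le_one]
  exact h.congr_fun (fun u hu ↦ abs_ellipticSubstDeriv_mul ha hab hε hu) measurableSet_Ioo

end Substitution

lemma Gamma_two_div_Gamma_one_half_mul_Gamma_three_halves :
    Real.Gamma 2 / (Real.Gamma (1 / 2) * Real.Gamma (2 - 1 / 2)) = 2 / π := by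
  rw [Real.Gamma_two, show (2 : ℝ) - 1 / 2 = 1 / 2 + 1 by norm_num,
    Real.Gamma_add_one (by norm_num), Real.Gamma_one_half_eq]
  have hπ : √π * √π = π := Real.mul_self_sqrt pi_nonneg
  have hπ₀ : √π ≠ 0 := (Real.sqrt_pos.2 pi_pos).ne'
  field_simp
  linarith

section QuarticIntegral

variable {a b : ℝ}

noncomputable def quarticIntegral (a b : ℝ) : ℝ :=
  ∫ u in (0 : ℝ)..1, √(1 - u) / √(quartic a b u)

lemma quarticKernel_combination {u : ℝ} (hu : u < 1) :
    (1 + b ^ 2) * quarticKernel a b 1 u + (1 - b ^ 2) * quarticKernel a b (-1) u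
      = a * (b ^ 4 - 1) * (√(1 - u) / √(quartic a b u)) := by
  have hs : √(1 - u) ≠ 0 := (Real.sqrt_pos.2 (sub_pos.2 hu)).ne'
  have hs2 : √(1 - u) ^ 2 = 1 - u := Real.sq_sqrt (sub_pos.2 hu).le
  by_cases hq : √(quartic a b u) = 0
  · simp [quarticKernel, hq]
  unfold quarticKernel
  field_simp
  linear_combination (-2 * a * (b ^ 4 - 1)) * hs2

lemma intervalIntegrable_quarticIntegral (ha : 1 < a) (hab : a < b) :
    IntervalIntegrable (fun u ↦ √(1 - u) / √(quartic a b u)) volume 0 1 := by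
  have hb4 : a * (b ^ 4 - 1) ≠ 0 := mul_ne_zero (by positivity)
    (sub_ne_zero.2 (one_lt_pow₀ (ha.trans hab) (by norm_num)).ne')
  have h := ((intervalIntegrable_quarticKernel ha hab (ε := 1) (by norm_num)).const_mul
    (1 + b ^ 2)).add ((intervalIntegrable_quarticKernel ha hab (ε := -1) (by norm_num)).const_mul
    (1 - b ^ 2)) |>.const_mul (a * (b ^ 4 - 1))⁻¹
  rw [intervalIntegrable_iff_integrableOn_Ioo_of_le zero_le_one] at h ⊢
  refine h.congr_fun (fun u hu ↦ ?_) measurableSet_Ioo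
  simp only [quarticKernel_combination hu.2, inv_mul_cancel_left₀ hb4]

lemma quarticIntegral_pos (ha : 1 < a) (hab : a < b) : 0 < quarticIntegral a b :=
  intervalIntegral.intervalIntegral_pos_of_pos_on (intervalIntegrable_quarticIntegral ha hab)
    (fun _ hu ↦ div_pos (Real.sqrt_pos.2 (sub_pos.2 hu.2))
      (Real.sqrt_pos.2 (quartic_pos ha hab hu.1)))
    zero_lt_one

lemma ellipticK_combination_eq_quarticIntegral (ha : 1 < a) (hab : a < b) :
    (1 + b ^ 2) * ellipticK (b * (a ^ 2 - 1) / (a * (b ^ 2 - 1)))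
        + (1 - b ^ 2) * ellipticK (b * (a ^ 2 + 1) / (a * (b ^ 2 + 1)))
      = a * (b ^ 4 - 1) * quarticIntegral a b := by
  have h₁ := ellipticK_eq_integral_quarticKernel ha hab (ε := 1) (by norm_num)
  have h₂ := ellipticK_eq_integral_quarticKernel ha hab (ε := -1) (by norm_num)
  rw [sub_neg_eq_add, sub_neg_eq_add] at h₂
  rw [h₁, h₂, ← intervalIntegral.integral_const_mul, ← intervalIntegral.integral_const_mul,
    ← intervalIntegral.integral_add
      ((intervalIntegrable_quarticKernel ha hab (by norm_num)).const_mul _)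
      ((intervalIntegrable_quarticKernel ha hab (by norm_num)).const_mul _),
    quarticIntegral, ← intervalIntegral.integral_const_mul]
  exact intervalIntegral.integral_congr_Ioo_of_le zero_le_one fun u hu ↦
    quarticKernel_combination hu.2

lemma quartic_scale_pos (ha : 1 < a) (hab : a < b) :
    0 < (b ^ 4 - 1) * (a ^ 2 * b ^ 2 - 1) * (b ^ 2 - a ^ 2) := by
  have hb4 : 1 < b ^ 4 := one_lt_pow₀ (ha.trans hab) (by norm_num)
  have ha2 : 1 < a ^ 2 := by nlinarith
  have hab2 : a ^ 2 < b ^ 2 := by nlinarith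
  have hab4 : 1 < a ^ 2 * b ^ 2 := by nlinarith
  exact mul_pos (mul_pos (by linarith) (by linarith)) (by linarith)

lemma quartic_eq_mul (hab : a ^ 2 ≠ b ^ 2) (hb : b ^ 4 ≠ 1) (hab' : a ^ 2 * b ^ 2 ≠ 1)
    (u : ℝ) :
    quartic a b u = u * (1 - 1 / (1 - b ^ 4) * u) * (1 - 1 / (1 - a ^ 2 * b ^ 2) * u) *
      (1 - a ^ 2 / (a ^ 2 - b ^ 2) * u) *
        ((b ^ 4 - 1) * (a ^ 2 * b ^ 2 - 1) * (b ^ 2 - a ^ 2)) := by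
  have h₁ : 1 - b ^ 4 ≠ 0 := sub_ne_zero.2 (Ne.symm hb)
  have h₂ : 1 - a ^ 2 * b ^ 2 ≠ 0 := sub_ne_zero.2 (Ne.symm hab')
  have h₂' : 1 - b ^ 2 * a ^ 2 ≠ 0 := by rwa [mul_comm]
  have h₃ : a ^ 2 - b ^ 2 ≠ 0 := sub_ne_zero.2 hab
  unfold quartic
  field_simp
  ring

lemma FD3_integrand_eq (ha : 1 < a) (hab : a < b) {u : ℝ} (hu : u ∈ Ioo 0 1) :
    u ^ ((1 : ℝ) / 2 - 1) * (1 - u) ^ ((2 : ℝ) - 1 / 2 - 1) *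
        (1 - 1 / (1 - b ^ 4) * u) ^ (-(1 / 2 : ℝ)) *
        (1 - 1 / (1 - a ^ 2 * b ^ 2) * u) ^ (-(1 / 2 : ℝ)) *
        (1 - a ^ 2 / (a ^ 2 - b ^ 2) * u) ^ (-(1 / 2 : ℝ))
      = √((b ^ 4 - 1) * (a ^ 2 * b ^ 2 - 1) * (b ^ 2 - a ^ 2)) *
          (√(1 - u) / √(quartic a b u)) := by
  have hb4 : 1 < b ^ 4 := one_lt_pow₀ (ha.trans hab) (by norm_num)
  have ha2 : 1 < a ^ 2 := by nlinarith
  have hab2 : a ^ 2 < b ^ 2 := by nlinarith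
  have hab4 : 1 < a ^ 2 * b ^ 2 := by nlinarith
  have hpos : ∀ x : ℝ, x < 0 → 0 < 1 - x * u := fun x hx ↦ by nlinarith [hu.1]
  have hA₁ := hpos _ (div_neg_of_pos_of_neg one_pos (by linarith : 1 - b ^ 4 < 0))
  have hA₂ := hpos _ (div_neg_of_pos_of_neg one_pos (by linarith : 1 - a ^ 2 * b ^ 2 < 0))
  have hA₃ := hpos _ (div_neg_of_pos_of_neg (by linarith : 0 < a ^ 2)
    (by linarith : a ^ 2 - b ^ 2 < 0))
  have hsqrt_inv : ∀ x : ℝ, 0 ≤ x → x ^ (-(1 / 2 : ℝ)) = (√x)⁻¹ := fun x hx ↦ by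
    rw [Real.rpow_neg hx, ← Real.sqrt_eq_rpow]
  rw [show (1 : ℝ) / 2 - 1 = -(1 / 2) by norm_num, show (2 : ℝ) - 1 / 2 - 1 = 1 / 2 by norm_num,
    ← Real.sqrt_eq_rpow, hsqrt_inv u hu.1.le, hsqrt_inv _ hA₁.le, hsqrt_inv _ hA₂.le,
    hsqrt_inv _ hA₃.le, quartic_eq_mul hab2.ne hb4.ne' hab4.ne',
    Real.sqrt_mul' _ (quartic_scale_pos ha hab).le, Real.sqrt_mul' _ hA₃.le,
    Real.sqrt_mul' _ hA₂.le, Real.sqrt_mul' _ hA₁.le, mul_div_left_comm,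
    div_mul_cancel_right₀ (Real.sqrt_pos.2 (quartic_scale_pos ha hab)).ne']
  ring

lemma FD3_eq_quarticIntegral (ha : 1 < a) (hab : a < b) :
    FD3 (1 / 2) (1 / 2) (1 / 2) (1 / 2) 2
        (1 / (1 - b ^ 4)) (1 / (1 - a ^ 2 * b ^ 2)) (a ^ 2 / (a ^ 2 - b ^ 2))
      = 2 / π * √((b ^ 4 - 1) * (a ^ 2 * b ^ 2 - 1) * (b ^ 2 - a ^ 2)) *
          quarticIntegral a b := by
  rw [FD3, Gamma_two_div_Gamma_one_half_mul_Gamma_three_halves,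
    intervalIntegral.integral_congr_Ioo_of_le zero_le_one fun u hu ↦ FD3_integrand_eq ha hab hu,
    intervalIntegral.integral_const_mul, quarticIntegral]
  ring

lemma sqrt_prefactor_eq (ha : 1 < a) (hab : a < b) :
    √((b ^ 2 - a ^ 2) * (1 - a ^ 2 * b ^ 2) / (1 - b ^ 4))
      = √((b ^ 4 - 1) * (a ^ 2 * b ^ 2 - 1) * (b ^ 2 - a ^ 2)) / (b ^ 4 - 1) := by
  have hb4 : 1 < b ^ 4 := one_lt_pow₀ (ha.trans hab) (by norm_num)
  rw [show (b ^ 2 - a ^ 2) * (1 - a ^ 2 * b ^ 2) / (1 - b ^ 4)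
      = (b ^ 4 - 1) * (a ^ 2 * b ^ 2 - 1) * (b ^ 2 - a ^ 2) / (b ^ 4 - 1) ^ 2 by
    field_simp [(by linarith : 1 - b ^ 4 ≠ 0), (by linarith : b ^ 4 - 1 ≠ 0)]; ring,
    Real.sqrt_div (quartic_scale_pos ha hab).le, Real.sqrt_sq (by linarith)]

end QuarticIntegral

theorem stmt_6 (a b : ℝ) (ha : 1 < a) (hab : a < b) :
    π = (2/a) * Real.sqrt ((b^2 - a^2) * (1 - a^2*b^2) / (1 - b^4)) *
          ((1 + b^2) * ellipticK (b * (a^2 - 1) / (a * (b^2 - 1))) +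
            (1 - b^2) * ellipticK (b * (a^2 + 1) / (a * (b^2 + 1)))) /
        FD3 (1/2) (1/2) (1/2) (1/2) 2
          (1/(1 - b^4)) (1/(1 - a^2*b^2)) (a^2/(a^2 - b^2)) := by
  have hb4 : b ^ 4 - 1 ≠ 0 := sub_ne_zero.2 (one_lt_pow₀ (ha.trans hab) (by norm_num)).ne'
  have hJ := quarticIntegral_pos ha hab
  have hD := Real.sqrt_pos.2 (quartic_scale_pos ha hab)
  rw [ellipticK_combination_eq_quarticIntegral ha hab, FD3_eq_quarticIntegral ha hab,
    sqrt_prefactor_eq ha hab]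
  field_simp
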